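/- Any n×n board coloured with c ≥ 2 colours can be flooded in at most c(n-1) Flood-It moves. In particular, max over boards B of m(B) is at most c(n-1). -/

import Mathlib

/-!
Keep every tile of the rows flooded so far inside the region of the origin `(0,0)`. The first
row is absorbed one tile at a time by playing the colour of the next tile, `n - 1` moves. Once
rows `0, …, i` lie in the region, playing every colour other than the region's current colour,
`c - 1` moves, absorbs all of row `i + 1`: each of its tiles neighbours the region, and a tile
outside the region keeps its colour until that colour is played. This gives
`(n - 1) + (n - 1)(c - 1) = c (n - 1)` moves.
-/

/-- Tiles of an `n × n` board. -/
abbrev Tile (n : ℕ) := Fin n × Fin n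

/-- Two tiles are adjacent if they differ by a unit step (horizontally or vertically). -/
def adjT {n : ℕ} (p q : Tile n) : Prop :=
  ((p.1 : ℤ) - (q.1 : ℤ)).natAbs + ((p.2 : ℤ) - (q.2 : ℤ)).natAbs = 1

/-- A board assigns one of `c` colours to each tile. -/
abbrev Board (n c : ℕ) := Tile n → Fin c

/-- `SameColorConn B p q` : `q` is in the monochromatic connected region of `B`
containing `p`. -/
def SameColorConn {n c : ℕ} (B : Board n c) (p q : Tile n) : Prop :=
  Relation.ReflTransGen (fun a b => adjT a b ∧ B a = B b) p q

open Classical in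
/-- A Flood-It move: recolour the monochromatic region containing `o` with colour `k`. -/
noncomputable def flood {n c : ℕ} (B : Board n c) (o : Tile n) (k : Fin c) : Board n c :=
  fun p => if SameColorConn B o p then k else B p

/-- Play a sequence of Flood-It moves (flooding from `o`). -/
noncomputable def playMoves {n c : ℕ} (o : Tile n) : Board n c → List (Fin c) → Board n c
  | B, [] => B
  | B, k :: ks => playMoves o (flood B o k) ks

/-- A board is flooded when it is monochromatic. -/
def Flooded {n c : ℕ} (B : Board n c) : Prop := ∀ p q : Tile n, B p = B q

/-- `floodMoves B o` : the minimum number of moves (flooding from `o`) needed to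
flood the board `B`. -/
noncomputable def floodMoves {n c : ℕ} (B : Board n c) (o : Tile n) : ℕ :=
  sInf {l : ℕ | ∃ ms : List (Fin c), ms.length = l ∧ Flooded (playMoves o B ms)}

section Moves

variable {n c : ℕ} {B : Board n c} {o p q : Tile n}

theorem SameColorConn.color_eq (h : SameColorConn B o p) : B p = B o := by
  induction h with
  | refl => rfl
  | tail _ hstep ih => rw [← ih, ← hstep.2]

theorem flood_apply_of_sameColorConn (k : Fin c) (h : SameColorConn B o p) :
    flood B o k p = k := by
  simp [flood, h]

theorem flood_apply_of_not_sameColorConn (k : Fin c) (h : ¬SameColorConn B o p) :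
    flood B o k p = B p := by
  simp [flood, h]

theorem SameColorConn.to_flood (h : SameColorConn B o p) (k : Fin c) :
    SameColorConn (flood B o k) o p := by
  induction h with
  | refl => exact .refl
  | tail hb hstep ih =>
    refine ih.tail ⟨hstep.1, ?_⟩
    rw [flood_apply_of_sameColorConn k hb, flood_apply_of_sameColorConn k (hb.tail hstep)]

theorem SameColorConn.to_playMoves (h : SameColorConn B o p) (ms : List (Fin c)) :
    SameColorConn (playMoves o B ms) o p := by
  induction ms generalizing B with
  | nil => exact h
  | cons k ms ih => exact ih (h.to_flood k)

theorem sameColorConn_flood_of_adjT (hp : SameColorConn B o p) (hpq : adjT p q) :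
    SameColorConn (flood B o (B q)) o q := by
  by_cases hq : SameColorConn B o q
  · exact hq.to_flood _
  · refine (hp.to_flood _).tail ⟨hpq, ?_⟩
    rw [flood_apply_of_sameColorConn _ hp, flood_apply_of_not_sameColorConn _ hq]

theorem sameColorConn_playMoves_of_adjT (hp : SameColorConn B o p) (hpq : adjT p q)
    {ms : List (Fin c)} (hq : B q ∈ ms) : SameColorConn (playMoves o B ms) o q := by
  induction ms generalizing B with
  | nil => simp at hq
  | cons k ms ih =>
    by_cases hk : B q = k
    · subst hk
      exact (sameColorConn_flood_of_adjT hp hpq).to_playMoves ms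
    by_cases hqo : SameColorConn B o q
    · exact (hqo.to_flood k).to_playMoves ms
    refine ih (hp.to_flood k) ?_
    rw [flood_apply_of_not_sameColorConn k hqo]
    exact (List.mem_cons.mp hq).resolve_left hk

theorem playMoves_append (B : Board n c) (ms ms' : List (Fin c)) :
    playMoves o B (ms ++ ms') = playMoves o (playMoves o B ms) ms' := by
  induction ms generalizing B with
  | nil => rfl
  | cons k ms ih => exact ih _

theorem flooded_of_forall_sameColorConn (h : ∀ p, SameColorConn B o p) : Flooded B :=
  fun p q => (h p).color_eq.trans (h q).color_eq.symm

theorem floodMoves_le_length {ms : List (Fin c)} (h : Flooded (playMoves o B ms)) :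
    floodMoves B o ≤ ms.length :=
  Nat.sInf_le ⟨ms, rfl, h⟩

end Moves

section Rows

variable {n c : ℕ}

theorem adjT_of_row_eq {p q : Tile n} (h₁ : (p.1 : ℕ) = q.1) (h₂ : (p.2 : ℕ) + 1 = q.2) :
    adjT p q := by
  simp only [adjT]
  omega

theorem adjT_of_col_eq {p q : Tile n} (h₁ : (p.1 : ℕ) + 1 = q.1) (h₂ : (p.2 : ℕ) = q.2) :
    adjT p q := by
  simp only [adjT]
  omega

def RowsFlooded (B : Board n c) (o : Tile n) (i : ℕ) : Prop :=
  ∀ p : Tile n, (p.1 : ℕ) ≤ i → SameColorConn B o p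

theorem exists_moves_first_row {o : Tile n} (ho₁ : (o.1 : ℕ) = 0) (ho₂ : (o.2 : ℕ) = 0)
    (B : Board n c) {y : ℕ} (hy : y < n) :
    ∃ ms : List (Fin c), ms.length = y ∧
      ∀ p : Tile n, (p.1 : ℕ) = 0 → (p.2 : ℕ) ≤ y → SameColorConn (playMoves o B ms) o p := by
  induction y with
  | zero =>
    refine ⟨[], rfl, fun p hp₁ hp₂ => ?_⟩
    obtain rfl : p = o := Prod.ext (Fin.ext (by omega)) (Fin.ext (by omega))
    exact .refl
  | succ y ih =>
    obtain ⟨ms, hlen, hrow⟩ := ih (by omega)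
    set C := playMoves o B ms
    let q : Tile n := (o.1, ⟨y + 1, hy⟩)
    refine ⟨ms ++ [C q], by simp [hlen], fun p hp₁ hp₂ => ?_⟩
    rw [playMoves_append]
    rcases Nat.lt_or_ge (p.2 : ℕ) (y + 1) with hlt | hge
    · exact (hrow p hp₁ (by omega)).to_playMoves _
    · have hpq : p = q :=
        Prod.ext (Fin.ext (by simp [q, ho₁, hp₁])) (Fin.ext (by simp only [q]; omega))
      have hprev : SameColorConn C o (o.1, ⟨y, by omega⟩) := hrow _ ho₁ le_rfl
      rw [hpq]
      exact sameColorConn_playMoves_of_adjT hprev (q := q) (adjT_of_row_eq rfl rfl)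
        (List.mem_singleton_self _)

theorem RowsFlooded.playMoves_erase {B : Board n c} {o : Tile n} {i : ℕ}
    (h : RowsFlooded B o i) :
    RowsFlooded (playMoves o B ((List.finRange c).erase (B o))) o (i + 1) := by
  intro q hq
  rcases Nat.lt_or_ge (q.1 : ℕ) (i + 1) with hlt | hge
  · exact (h q (by omega)).to_playMoves _
  let p : Tile n := (⟨i, by omega⟩, q.2)
  have hp : SameColorConn B o p := h p le_rfl
  have hpq : adjT p q := adjT_of_col_eq (by simp only [p]; omega) rfl
  by_cases hcol : B q = B o
  · exact SameColorConn.to_playMoves (hp.tail ⟨hpq, hp.color_eq.trans hcol.symm⟩) _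
  · exact sameColorConn_playMoves_of_adjT hp hpq
      ((List.mem_erase_of_ne hcol).mpr (List.mem_finRange _))

theorem exists_moves_rowsFlooded {o : Tile n} (ho₁ : (o.1 : ℕ) = 0) (ho₂ : (o.2 : ℕ) = 0)
    (B : Board n c) {i : ℕ} (hi : i < n) :
    ∃ ms : List (Fin c), ms.length = (n - 1) + i * (c - 1) ∧
      RowsFlooded (playMoves o B ms) o i := by
  induction i with
  | zero =>
    obtain ⟨ms, hlen, hrow⟩ := exists_moves_first_row ho₁ ho₂ B (y := n - 1) (by omega)
    exact ⟨ms, by simp [hlen], fun p hp => hrow p (by omega) (by omega)⟩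
  | succ i ih =>
    obtain ⟨ms, hlen, hrows⟩ := ih (by omega)
    refine ⟨ms ++ (List.finRange c).erase (playMoves o B ms o), ?_, ?_⟩
    · rw [List.length_append, List.length_erase_of_mem (List.mem_finRange _),
        List.length_finRange, hlen, Nat.succ_mul, Nat.add_assoc]
    · rw [playMoves_append]
      exact hrows.playMoves_erase

end Rows

/-- any n×n board with c ≥ 2 colours can be flooded in at most
c(n-1) moves; in particular the max of m(B) over such boards is at most c(n-1). -/
theorem stmt9 (n c : ℕ) (hn : 1 ≤ n) (hc : 2 ≤ c) (B : Board n c) :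
    floodMoves B (⟨0, hn⟩, ⟨0, hn⟩) ≤ c * (n - 1) := by
  obtain ⟨ms, hlen, hrows⟩ := exists_moves_rowsFlooded (o := (⟨0, hn⟩, ⟨0, hn⟩)) rfl rfl B
    (i := n - 1) (by omega)
  have hflooded : Flooded (playMoves (⟨0, hn⟩, ⟨0, hn⟩) B ms) :=
    flooded_of_forall_sameColorConn fun p => hrows p (by omega)
  calc floodMoves B (⟨0, hn⟩, ⟨0, hn⟩) ≤ ms.length := floodMoves_le_length hflooded
    _ = (n - 1) + (n - 1) * (c - 1) := hlen
    _ = c * (n - 1) := by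
      obtain ⟨d, rfl⟩ : ∃ d, c = d + 1 := ⟨c - 1, by omega⟩
      simp only [Nat.add_sub_cancel]
      ring
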